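/- For every regular uncountable cardinal κ, the stationary pseudo-intersection number and the stationary tower number both equal κ: there exists a family of κ many stationary subsets of κ, well-ordered by ⊇*_cl, which has the <κ-stationary intersection property but no stationary pseudo-intersection, while every family of fewer than κ stationary subsets of κ with the <κ-stationary intersection property has a stationary pseudo-intersection. -/

import Mathlib

/-!
Every point `y < κ` of countable cofinality is the supremum of a sequence `(f n y)ₙ` below it.
For some `n` the regressive function `g = f n` is unbounded on a stationary set, in the sense
that `{y | η < g y}` is stationary for every `η`: otherwise the countably many witnessing clubs,
intersected above a bound for the countably many thresholds `η`, would contain a point `y` whose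
approximations `f n y` all lie below a bound that `y` exceeds.
The sets `{y | j < g y}` decrease in `j`, fewer than `κ` of them contain a common one since `κ` is
regular, and their diagonal intersection is trivial because `y` cannot lie in the set indexed by
`g y`. By normality of the club filter, a stationary pseudo-intersection would meet that diagonal
intersection in a stationary set.
For fewer than `κ` sets with the `<κ`-stationary intersection property, the intersection itself
is a stationary pseudo-intersection.
-/

open Set Cardinal

/-- `c` is a club in the well-ordered type `α` (thought of as the cardinal `κ = #α`):
it is closed (contains the supremum of each of its nonempty bounded subsets) and unbounded. -/
def IsClubIn {α : Type*} [LinearOrder α] (c : Set α) : Prop :=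
  (∀ s ⊆ c, s.Nonempty → ∀ a : α, IsLUB s a → a ∈ c) ∧ ∀ a : α, ∃ b ∈ c, a < b

/-- `x` is stationary: it meets every club. -/
def IsStatIn {α : Type*} [LinearOrder α] (x : Set α) : Prop :=
  ∀ c : Set α, IsClubIn c → (x ∩ c).Nonempty

/-- `x ⊆*_cl y`: `x \ y` is non-stationary. -/
def AlmostSubsetCl {α : Type*} [LinearOrder α] (x y : Set α) : Prop :=
  ¬ IsStatIn (x \ y)

/-- `z` is a stationary pseudo-intersection of the family `F`. -/
def IsStatPseudoInter {α : Type*} [LinearOrder α] (F : Set (Set α)) (z : Set α) : Prop :=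
  IsStatIn z ∧ ∀ y ∈ F, AlmostSubsetCl z y

theorem strictMono_iterate_apply_of_lt_map {β : Type*} [Preorder β] {g : β → β}
    (hg : ∀ x, x < g x) (a : β) : StrictMono fun n => g^[n] a :=
  strictMono_nat_of_lt_succ fun n => by
    simpa only [Function.iterate_succ_apply'] using hg (g^[n] a)

theorem nonempty_of_aleph0_lt_mk {β : Type*} (h : ℵ₀ < #β) : Nonempty β :=
  mk_ne_zero_iff.mp (aleph0_pos.trans h).ne'

section LinearOrder

variable {α : Type*} [LinearOrder α]

theorem IsStatIn.mono {x y : Set α} (hxy : x ⊆ y) (hx : IsStatIn x) : IsStatIn y :=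
  fun c hc => (hx c hc).mono (inter_subset_inter_left _ hxy)

theorem exists_isClubIn_disjoint_of_not_isStatIn {x : Set α} (hx : ¬ IsStatIn x) :
    ∃ c, IsClubIn c ∧ Disjoint x c := by
  simp only [IsStatIn, not_forall, not_nonempty_iff_eq_empty, exists_prop] at hx
  obtain ⟨c, hc, hxc⟩ := hx
  exact ⟨c, hc, disjoint_iff_inter_eq_empty.mpr hxc⟩

theorem IsClubIn.mem_of_isLUB_of_between {c : Set α} (hc : IsClubIn c) {u : ℕ → α}
    (hu : Monotone u) {m : α} (hm : IsLUB (range u) m) (N : ℕ)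
    (hsep : ∀ n ≥ N, ∃ d ∈ c, u n < d ∧ d ≤ u (n + 1)) : m ∈ c := by
  choose v hvc hlt hle using fun k => hsep (N + k) (Nat.le_add_right N k)
  refine hc.1 (range v) (range_subset_iff.mpr hvc) (range_nonempty v) m
    ⟨?_, fun w hw => hm.2 ?_⟩
  · rintro _ ⟨k, rfl⟩
    exact (hle k).trans (hm.1 (mem_range_self _))
  · rintro _ ⟨n, rfl⟩
    exact (hu (Nat.le_add_left n N)).trans ((hlt n).le.trans (hw (mem_range_self n)))

def diagInter (c : α → Set α) : Set α :=
  {x | ∀ i < x, x ∈ c i}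

section Tower

variable (S : Set α) (g : α → α)

/-- The point `j` is added only to make `j ↦ tower S g j` injective; singletons are
nonstationary. -/
def tower (j : α) : Set α :=
  insert j {y ∈ S | j < g y}

variable {S g}

theorem tower_injective (hg : ∀ y ∈ S, g y < y) : Function.Injective (tower S g) := by
  have hnot : ∀ {i j}, i < j → i ∉ tower S g j := fun hij hi => by
    rcases hi with rfl | ⟨hiS, hji⟩
    exacts [hij.ne rfl, lt_asymm hij (hji.trans (hg _ hiS))]
  intro i j hij
  by_contra hne
  rcases lt_or_gt_of_ne hne with h | h
  · exact hnot h (by rw [← hij]; exact mem_insert _ _)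
  · exact hnot h (by rw [hij]; exact mem_insert _ _)

theorem diagInter_tower_subset_Iic (hg : ∀ y ∈ S, g y < y) (a : α) :
    diagInter (tower S g) ⊆ Iic a := by
  intro y hy
  rw [mem_Iic]
  by_contra! hay
  rcases hy a hay with rfl | ⟨hyS, -⟩
  · exact lt_irrefl _ hay
  rcases hy (g y) (hg y hyS) with h | ⟨-, h⟩
  · exact (hg y hyS).ne h.symm
  · exact lt_irrefl _ h

end Tower

end LinearOrder

section Regular

variable {α : Type*} [LinearOrder α]
  (hunc : ℵ₀ < #α) (hreg : (#α).IsRegular) (hinit : ∀ a : α, #(Iio a) < #α)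

include hunc hinit in
theorem mk_Iic_lt (a : α) : #(Iic a) < #α := by
  rw [← Iio_insert]
  exact mk_insert_le.trans_lt (add_lt_of_lt hunc.le (hinit a) (one_lt_aleph0.trans hunc))

include hunc hinit in
theorem exists_gt_of_mk_Iio_lt (a : α) : ∃ b, a < b := by
  by_contra! h
  have hIic : Iic a = Set.univ := eq_univ_of_forall h
  exact (mk_Iic_lt hunc hinit a).ne (by rw [hIic, mk_univ])

include hunc hreg hinit in
theorem bddAbove_of_mk_lt {s : Set α} (hs : #s < #α) : BddAbove s := by
  by_contra hb
  have hcov : ⋃ b : s, Iic (b : α) = Set.univ := eq_univ_of_forall fun x => by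
    obtain ⟨b, hbs, hxb⟩ := not_bddAbove_iff.mp hb x
    exact mem_iUnion.mpr ⟨⟨b, hbs⟩, hxb.le⟩
  have hle := mk_iUnion_le_sum_mk (f := fun b : s => Iic (b : α))
  rw [hcov, mk_univ] at hle
  exact hle.not_gt (sum_lt_of_isRegular hreg hs fun b => mk_Iic_lt hunc hinit b)

include hunc hreg hinit in
theorem bddAbove_of_countable {s : Set α} (hs : s.Countable) : BddAbove s :=
  bddAbove_of_mk_lt hunc hreg hinit (hs.le_aleph0.trans_lt hunc)

include hunc hinit in
theorem isClubIn_Ioi (a : α) : IsClubIn (Ioi a) := by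
  refine ⟨fun s hs ⟨x, hx⟩ m hm => (hs hx).trans_le (hm.1 hx), fun b => ?_⟩
  obtain ⟨c, hc⟩ := exists_gt_of_mk_Iio_lt hunc hinit (max a b)
  exact ⟨c, (le_max_left a b).trans_lt hc, (le_max_right a b).trans_lt hc⟩

include hunc hinit in
theorem not_isStatIn_of_subset_Iic {x : Set α} {a : α} (hx : x ⊆ Iic a) : ¬ IsStatIn x :=
  fun hst => by
    obtain ⟨y, hyx, hay⟩ := hst _ (isClubIn_Ioi hunc hinit a)
    exact (hx hyx).not_gt hay

include hunc hinit in
theorem not_isStatIn_empty : ¬ IsStatIn (∅ : Set α) := by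
  obtain ⟨a⟩ := nonempty_of_aleph0_lt_mk hunc
  exact not_isStatIn_of_subset_Iic hunc hinit (empty_subset (Iic a))

include hunc hreg hinit in
theorem exists_between_mem_of_isClubIn {C : Set (Set α)} (hC : ∀ c ∈ C, IsClubIn c)
    (hCcard : #C < #α) (x : α) :
    ∃ b, x < b ∧ ∀ c ∈ C, ∃ d ∈ c, x < d ∧ d ≤ b := by
  choose d hdc hxd using fun c : C => (hC c c.2).2 x
  obtain ⟨u, hu⟩ := bddAbove_of_mk_lt hunc hreg hinit (mk_range_le.trans_lt hCcard)
  obtain ⟨b, hb⟩ := exists_gt_of_mk_Iio_lt hunc hinit (max u x)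
  refine ⟨b, (le_max_right u x).trans_lt hb,
    fun c hc => ⟨d ⟨c, hc⟩, hdc ⟨c, hc⟩, hxd _, ?_⟩⟩
  exact ((hu (mem_range_self _)).trans (le_max_left u x)).trans hb.le

include hunc hinit in
theorem isStatPseudoInter_sInter {F : Set (Set α)} (hF : IsStatIn (⋂₀ F)) :
    IsStatPseudoInter F (⋂₀ F) :=
  ⟨hF, fun y hy => by
    rw [AlmostSubsetCl, sdiff_eq_empty.mpr (sInter_subset_of_mem hy)]
    exact not_isStatIn_empty hunc hinit⟩

section Tower

variable {S : Set α} {g : α → α}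

include hunc hinit in
theorem almostSubsetCl_tower {i j : α} (hij : i ≤ j) :
    AlmostSubsetCl (tower S g j) (tower S g i) := by
  refine not_isStatIn_of_subset_Iic hunc hinit (a := j) ?_
  rintro y ⟨rfl | ⟨hyS, hjy⟩, hyi⟩
  · exact self_mem_Iic
  · exact (hyi (mem_insert_of_mem _ ⟨hyS, hij.trans_lt hjy⟩)).elim

include hunc hreg hinit in
theorem isStatIn_biInter_tower (hstat : ∀ η, IsStatIn {y ∈ S | η < g y}) {s : Set α}
    (hs : #s < #α) : IsStatIn (⋂ i ∈ s, tower S g i) := by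
  obtain ⟨b, hb⟩ := bddAbove_of_mk_lt hunc hreg hinit hs
  exact (hstat b).mono fun y hy =>
    mem_iInter₂.mpr fun i hi => mem_insert_of_mem _ ⟨hy.1, (hb hi).trans_lt hy.2⟩

end Tower

variable [WellFoundedLT α]

theorem exists_isLUB_of_bddAbove {s : Set α} (hs : BddAbove s) : ∃ a, IsLUB s a := by
  obtain ⟨m, hm, hmin⟩ := wellFounded_lt.has_min _ hs
  exact ⟨m, hm, fun v hv => not_lt.mp (hmin v hv)⟩

include hunc hreg hinit in
theorem exists_isLUB_iterate {g : α → α} (hg : ∀ x, x < g x) (a : α) :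
    ∃ m, a < m ∧ IsLUB (range fun n => g^[n] a) m := by
  obtain ⟨m, hm⟩ := exists_isLUB_of_bddAbove (bddAbove_of_countable hunc hreg hinit
    (countable_range fun n => g^[n] a))
  exact ⟨m, (hg a).trans_le (hm.1 ⟨1, rfl⟩), hm⟩

include hunc hreg hinit in
theorem isClubIn_sInter {C : Set (Set α)} (hC : ∀ c ∈ C, IsClubIn c) (hCcard : #C < #α) :
    IsClubIn (⋂₀ C) := by
  refine ⟨fun s hs hne m hm => mem_sInter.mpr fun c hc =>
    (hC c hc).1 s (fun y hy => hs hy c hc) hne m hm, fun a => ?_⟩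
  choose g hg hgC using exists_between_mem_of_isClubIn hunc hreg hinit hC hCcard
  obtain ⟨m, ham, hm⟩ := exists_isLUB_iterate hunc hreg hinit hg a
  refine ⟨m, mem_sInter.mpr fun c hc => ?_, ham⟩
  refine (hC c hc).mem_of_isLUB_of_between
    (strictMono_iterate_apply_of_lt_map hg a).monotone hm 0 fun n _ => ?_
  simpa only [Function.iterate_succ_apply'] using hgC (g^[n] a) c hc

include hunc hreg hinit in
theorem isClubIn_inter {c d : Set α} (hc : IsClubIn c) (hd : IsClubIn d) :
    IsClubIn (c ∩ d) := by
  rw [← sInter_pair]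
  exact isClubIn_sInter hunc hreg hinit (by rintro _ (rfl | rfl) <;> assumption)
    (mk_le_aleph0.trans_lt hunc)

include hunc hreg hinit in
theorem isClubIn_diagInter {c : α → Set α} (hc : ∀ i, IsClubIn (c i)) :
    IsClubIn (diagInter c) := by
  refine ⟨fun s hs _ m hm i hi => ?_, fun a => ?_⟩
  · obtain ⟨y, hys, hiy, -⟩ := hm.exists_between hi
    exact (hc i).1 (s ∩ Ici y) (fun z hz => hs hz.1 i (hiy.trans_le hz.2)) ⟨y, hys, le_rfl⟩ m
      (hm.inter_Ici_of_mem hys)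
  · choose g hg hgc using fun x => exists_between_mem_of_isClubIn hunc hreg hinit
      (C := c '' Iic x) (by rintro _ ⟨i, -, rfl⟩; exact hc i)
      (mk_image_le.trans_lt (mk_Iic_lt hunc hinit x)) x
    obtain ⟨m, ham, hm⟩ := exists_isLUB_iterate hunc hreg hinit hg a
    have hu := strictMono_iterate_apply_of_lt_map hg a
    refine ⟨m, fun i hi => ?_, ham⟩
    obtain ⟨_, ⟨N, rfl⟩, hiN, -⟩ := hm.exists_between hi
    refine (hc i).mem_of_isLUB_of_between hu.monotone hm N fun n hn => ?_
    simpa only [Function.iterate_succ_apply'] using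
      hgc (g^[n] a) (c i) ⟨i, hiN.le.trans (hu.monotone hn), rfl⟩

include hunc hreg hinit in
theorem isStatIn_inter_diagInter {x : α → Set α} {z : Set α} (hz : IsStatIn z)
    (hzx : ∀ i, AlmostSubsetCl z (x i)) : IsStatIn (z ∩ diagInter x) := by
  choose c hc hdisj using fun i => exists_isClubIn_disjoint_of_not_isStatIn (hzx i)
  intro d hd
  obtain ⟨y, hyz, hyc, hyd⟩ :=
    hz _ (isClubIn_inter hunc hreg hinit (isClubIn_diagInter hunc hreg hinit hc) hd)
  refine ⟨y, ⟨hyz, fun i hi => ?_⟩, hyd⟩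
  by_contra hyx
  exact disjoint_left.mp (hdisj i) ⟨hyz, hyx⟩ (hyc i hi)

def omegaCofPoints (α : Type*) [LinearOrder α] : Set α :=
  {x | ∃ u : ℕ → α, StrictMono u ∧ IsLUB (range u) x}

include hunc hreg hinit in
theorem isStatIn_omegaCofPoints : IsStatIn (omegaCofPoints α) := by
  intro c hc
  obtain ⟨a⟩ := nonempty_of_aleph0_lt_mk hunc
  choose g hgc hg using hc.2
  obtain ⟨m, -, hm⟩ := exists_isLUB_iterate hunc hreg hinit hg a
  have hu := strictMono_iterate_apply_of_lt_map hg a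
  refine ⟨m, ⟨_, hu, hm⟩, hc.mem_of_isLUB_of_between hu.monotone hm 0 fun n _ =>
    ⟨g^[n + 1] a, ?_, hu n.lt_succ_self, le_rfl⟩⟩
  rw [Function.iterate_succ_apply']
  exact hgc _

include hunc hreg hinit in
theorem exists_forall_isStatIn_lt_apply {S : Set α} (hS : IsStatIn S) (f : ℕ → α → α)
    (hf : ∀ y ∈ S, ∀ b, (∀ n, f n y ≤ b) → y ≤ b) :
    ∃ n, ∀ η, IsStatIn {y ∈ S | η < f n y} := by
  by_contra! h
  choose η hη using h
  choose c hc hdisj using fun n => exists_isClubIn_disjoint_of_not_isStatIn (hη n)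
  obtain ⟨b, hb⟩ := bddAbove_of_countable hunc hreg hinit (countable_range η)
  have hC : IsClubIn (⋂₀ range c ∩ Ioi b) :=
    isClubIn_inter hunc hreg hinit (isClubIn_sInter hunc hreg hinit (forall_mem_range.mpr hc)
      ((countable_range c).le_aleph0.trans_lt hunc)) (isClubIn_Ioi hunc hinit b)
  obtain ⟨y, hyS, hyc, hby⟩ := hS _ hC
  refine (hf y hyS b fun n => ?_).not_gt hby
  by_contra! hlt
  exact disjoint_left.mp (hdisj n) ⟨hyS, (hb (mem_range_self n)).trans_lt hlt⟩
    (hyc _ (mem_range_self n))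

include hunc hreg hinit in
theorem exists_regressive_forall_isStatIn_lt :
    ∃ g : α → α, (∀ y ∈ omegaCofPoints α, g y < y) ∧
      ∀ η, IsStatIn {y ∈ omegaCofPoints α | η < g y} := by
  have := nonempty_of_aleph0_lt_mk hunc
  choose! u hu hlub using fun y (hy : y ∈ omegaCofPoints α) => hy
  obtain ⟨n, hn⟩ := exists_forall_isStatIn_lt_apply hunc hreg hinit
    (isStatIn_omegaCofPoints hunc hreg hinit) (fun n y => u y n)
    fun y hy b hb => (hlub y hy).2 (forall_mem_range.mpr hb)
  exact ⟨fun y => u y n,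
    fun y hy => (hu y hy n.lt_succ_self).trans_le ((hlub y hy).1 (mem_range_self _)), hn⟩

section Tower

variable {S : Set α} {g : α → α}

include hunc hreg hinit in
theorem not_exists_isStatPseudoInter_tower (hg : ∀ y ∈ S, g y < y) :
    ¬ ∃ z, IsStatPseudoInter (range (tower S g)) z := by
  rintro ⟨z, hz, hzx⟩
  obtain ⟨a⟩ := nonempty_of_aleph0_lt_mk hunc
  exact not_isStatIn_of_subset_Iic hunc hinit
    (inter_subset_right.trans (diagInter_tower_subset_Iic hg a))
    (isStatIn_inter_diagInter hunc hreg hinit hz fun i => hzx _ (mem_range_self i))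

end Tower

end Regular

/-- `κ` is represented by a well-ordered type `α` of regular uncountable cardinality all of whose
proper initial segments have cardinality `< #α`. -/
theorem statTower_and_statPseudoInter_number_eq {α : Type*} [LinearOrder α] [WellFoundedLT α]
    (hreg : (#α).IsRegular) (hunc : ℵ₀ < #α)
    (hinit : ∀ a : α, #(Set.Iio a) < #α) :
    (∃ x : α → Set α, Function.Injective x ∧ (∀ i, IsStatIn (x i)) ∧
      (∀ i j : α, i ≤ j → AlmostSubsetCl (x j) (x i)) ∧
      (∀ s : Set α, #s < #α → IsStatIn (⋂ i ∈ s, x i)) ∧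
      ¬ ∃ z : Set α, IsStatPseudoInter (Set.range x) z) ∧
    (∀ F : Set (Set α), #F < #α → (∀ y ∈ F, IsStatIn y) →
      (∀ F' ⊆ F, #F' < #α → IsStatIn (⋂₀ F')) →
      ∃ z : Set α, IsStatPseudoInter F z) := by
  obtain ⟨g, hg, hstat⟩ := exists_regressive_forall_isStatIn_lt hunc hreg hinit
  refine ⟨⟨tower (omegaCofPoints α) g, tower_injective hg,
    fun j => (hstat j).mono (subset_insert _ _),
    fun i j hij => almostSubsetCl_tower hunc hinit hij,
    fun s hs => isStatIn_biInter_tower hunc hreg hinit hstat hs,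
    not_exists_isStatPseudoInter_tower hunc hreg hinit hg⟩,
    fun F hF _ hFinter =>
      ⟨⋂₀ F, isStatPseudoInter_sInter hunc hinit (hFinter F subset_rfl hF)⟩⟩
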